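/- arXiv:2007.07307 — 3 statements merged into one kernel-verified Lean document; each statement's English description precedes it below -/
import Mathlib

section
/- Let g = δ²/2 + δd with K ≥ 2, δ > 0, d > 0. The entropy H_rVQ of the worst-case rVQ categorical distribution (one probability proportional to exp(-d²/2), K-1 probabilities each proportional to exp(-(d+δ)²/2)) satisfies |H_rVQ - (K-1)(1+g)exp(-g)| ≤ C·(K-1)²·exp(-2g)·(1+g) for some constant C independent of d (holding for g sufficiently large, e.g. (K-1)exp(-g) ≤ 1/2). -/
open Real Finset

theorem rvq_entropy_first_order_bound
    (K : ℕ) (hK : 2 ≤ K) (δ : ℝ) (hδ : 0 < δ) :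
    ∃ C : ℝ, 0 < C ∧ ∀ d : ℝ, 0 < d →
      (K - 1 : ℝ) * exp (-(δ ^ 2 / 2 + δ * d)) ≤ 1 / 2 →
      ∀ Z : ℝ, Z = exp (-d ^ 2 / 2) + (K - 1 : ℝ) * exp (-(d + δ) ^ 2 / 2) →
      ∀ pp : Fin K → ℝ,
        (∀ i, pp i = if (i : ℕ) = 0 then exp (-d ^ 2 / 2) / Z
                     else exp (-(d + δ) ^ 2 / 2) / Z) →
      |(-∑ i, pp i * log (pp i))
          - (K - 1 : ℝ) * (1 + (δ ^ 2 / 2 + δ * d)) * exp (-(δ ^ 2 / 2 + δ * d))|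
        ≤ C * (K - 1 : ℝ) ^ 2 * exp (-2 * (δ ^ 2 / 2 + δ * d))
            * (1 + (δ ^ 2 / 2 + δ * d)) := by
  refine ⟨1, one_pos, ?_⟩
  intro d hd hhalf Z hZ pp hpp
  obtain ⟨n, rfl⟩ : ∃ n, K = n + 1 := ⟨K - 1, by omega⟩
  have hn : 1 ≤ n := by omega
  set g : ℝ := δ ^ 2 / 2 + δ * d with hgdef
  have hg0 : 0 < g := by positivity
  have hKn : ((n + 1 : ℕ) : ℝ) - 1 = (n : ℝ) := by push_cast; ring
  rw [hKn] at hhalf hZ ⊢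
  set ε : ℝ := (n : ℝ) * exp (-g) with hεdef
  have hn1 : (1:ℝ) ≤ (n:ℝ) := by exact_mod_cast hn
  have hε0 : 0 < ε := by positivity
  have h1ε : (0:ℝ) < 1 + ε := by linarith
  have h1ε' : (1 + ε : ℝ) ≠ 0 := ne_of_gt h1ε
  have hgexp : exp (-(d + δ) ^ 2 / 2) = exp (-d ^ 2 / 2) * exp (-g) := by
    rw [← Real.exp_add]
    congr 1
    rw [hgdef]; ring
  have hZeq : Z = exp (-d ^ 2 / 2) * (1 + ε) := by
    rw [hZ, hgexp, hεdef]; ring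
  have hexp0 : exp (-d ^ 2 / 2) ≠ 0 := exp_ne_zero _
  have hp0 : pp 0 = 1 / (1 + ε) := by
    rw [hpp 0, if_pos (by simp : ((0 : Fin (n+1)) : ℕ) = 0), hZeq]
    field_simp
  have hpb : ∀ i : Fin (n + 1), (i : ℕ) ≠ 0 → pp i = exp (-g) / (1 + ε) := by
    intro i hi
    rw [hpp i, if_neg hi, hZeq, hgexp]
    field_simp
  have hsum : ∑ i, pp i * log (pp i)
      = (1/(1+ε)) * log (1/(1+ε))
        + (n:ℝ) * ((exp (-g)/(1+ε)) * log (exp (-g)/(1+ε))) := by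
    rw [Fin.sum_univ_succ, hp0]
    congr 1
    have : ∀ i : Fin n, pp i.succ * log (pp i.succ)
        = (exp (-g)/(1+ε)) * log (exp (-g)/(1+ε)) := by
      intro i
      rw [hpb i.succ (by simp [Fin.val_succ])]
    rw [Finset.sum_congr rfl (fun i _ => this i), Finset.sum_const, card_univ,
      Fintype.card_fin, nsmul_eq_mul]
  set L : ℝ := log (1 + ε) with hLdef
  have hlog1 : log (1/(1+ε)) = -L := by rw [one_div, Real.log_inv]
  have hlog2 : log (exp (-g)/(1+ε)) = -g - L := by
    rw [Real.log_div (exp_ne_zero _) h1ε', Real.log_exp]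
  have hL1 : L ≤ ε := by
    have := Real.log_le_sub_one_of_pos h1ε
    linarith
  have hL3 : ε - L ≤ ε ^ 2 := by
    have h := Real.log_le_sub_one_of_pos (inv_pos.mpr h1ε)
    rw [Real.log_inv] at h
    have hmul : (1 + ε) * (1 + ε)⁻¹ = 1 := mul_inv_cancel₀ h1ε'
    have h' : ε ≤ (1 + ε) * L := by nlinarith [mul_le_mul_of_nonneg_left h (le_of_lt h1ε)]
    nlinarith [mul_le_mul_of_nonneg_left hL1 hε0.le]
  have hT : (n:ℝ) * (1 + g) * exp (-g) = ε * (1 + g) := by rw [hεdef]; ring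
  have hE2 : exp (-2 * g) = exp (-g) * exp (-g) := by rw [← Real.exp_add]; ring_nf
  have hR : (1:ℝ) * (n:ℝ) ^ 2 * exp (-2 * g) * (1 + g) = ε ^ 2 * (1 + g) := by
    rw [hεdef, hE2]; ring
  have hD : (-∑ i, pp i * log (pp i)) - (n:ℝ) * (1 + g) * exp (-g)
      = (L - ε) - ε ^ 2 * g / (1 + ε) := by
    rw [hsum, hlog1, hlog2, hT]
    field_simp
    rw [hεdef]
    ring
  rw [hD, hR, abs_le]
  clear_value g ε L
  have hdiv : ε ^ 2 * g / (1 + ε) ≤ ε ^ 2 * g := by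
    apply div_le_self (by positivity) (by linarith)
  have hdiv0 : 0 ≤ ε ^ 2 * g / (1 + ε) := by positivity
  have h0 : (0:ℝ) ≤ ε ^ 2 * (1 + g) := by positivity
  have hexpand : ε ^ 2 * (1 + g) = ε ^ 2 + ε ^ 2 * g := by ring
  constructor
  · linarith
  · linarith
end

section
/- Let K ≥ 2 and ℓ > 0 with (K-1)exp(-ℓ) ≤ 1/2. The entropy H_softmax of the categorical distribution obtained by softmax of logits (c+ℓ, c, …, c) (K-1 copies of c) satisfies |H_softmax - (K-1)(1+ℓ)exp(-ℓ)| ≤ C·(K-1)²·exp(-2ℓ)·(1+ℓ) for some absolute constant C. -/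
open Real Finset

theorem softmax_entropy_first_order_bound :
    ∃ C : ℝ, 0 < C ∧ ∀ (K : ℕ), 2 ≤ K → ∀ c ℓ : ℝ, 0 < ℓ →
      (K - 1 : ℝ) * exp (-ℓ) ≤ 1 / 2 →
      ∀ pp : Fin K → ℝ,
        (∀ i, pp i = exp ((if (i : ℕ) = 0 then c + ℓ else c))
                     / ∑ j : Fin K, exp ((if (j : ℕ) = 0 then c + ℓ else c))) →
      |(-∑ i, pp i * log (pp i)) - (K - 1 : ℝ) * (1 + ℓ) * exp (-ℓ)|
        ≤ C * (K - 1 : ℝ) ^ 2 * exp (-2 * ℓ) * (1 + ℓ) := by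
  refine ⟨1, one_pos, ?_⟩
  intro K hK c ℓ hℓ _ pp hpp
  haveI : NeZero K := ⟨by omega⟩
  set m : ℝ := (K - 1 : ℝ) with hmdef
  have hm1 : (1:ℝ) ≤ m := by
    have : (2:ℝ) ≤ (K:ℝ) := by exact_mod_cast hK
    rw [hmdef]; linarith
  set E : ℝ := exp ℓ with hEdef
  have hE0 : 0 < E := exp_pos ℓ
  set ε : ℝ := m / E with hεdef
  have hε0 : 0 < ε := div_pos (by linarith) hE0
  have h1ε : 0 < 1 + ε := by linarith
  have hEm : 0 < E + m := by linarith
  -- sum of a function that is `a` at index 0 and `b` elsewhere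
  have hsumgen : ∀ a b : ℝ, ∑ i : Fin K, (if (i:ℕ) = 0 then a else b) = a + m * b := by
    intro a b
    have h1 : ∀ i : Fin K, (if (i:ℕ) = 0 then a else b)
        = b + (if i = 0 then a - b else 0) := by
      intro i
      by_cases h : i = 0
      · subst h; simp
      · have h' : (i:ℕ) ≠ 0 := by intro h2; exact h (Fin.ext (by rw [h2]; simp))
        simp [h, h']
    rw [Finset.sum_congr rfl fun i _ => h1 i, Finset.sum_add_distrib,
        Finset.sum_ite_eq' Finset.univ (0 : Fin K) (fun _ => a - b)]
    simp [hmdef]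
    push_cast
    ring
  have hD : ∑ j : Fin K, exp ((if (j:ℕ) = 0 then c + ℓ else c)) = exp c * (E + m) := by
    have h1 : ∀ j : Fin K, exp ((if (j:ℕ) = 0 then c + ℓ else c))
        = (if (j:ℕ) = 0 then exp (c+ℓ) else exp c) := by
      intro j; split_ifs <;> rfl
    rw [Finset.sum_congr rfl fun j _ => h1 j, hsumgen]
    rw [exp_add, hEdef]; ring
  have hL : log (E + m) = ℓ + log (1 + ε) := by
    have h1 : E + m = E * (1 + ε) := by
      rw [hεdef]; field_simp
    rw [h1, log_mul (ne_of_gt hE0) (ne_of_gt h1ε), hEdef, log_exp]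
  have hH : (∑ i, pp i * log (pp i))
      = (E/(E+m)) * (ℓ - log (E+m)) + m * ((1/(E+m)) * (- log (E+m))) := by
    have hterm : ∀ i : Fin K, pp i * log (pp i)
        = if (i:ℕ) = 0 then (E/(E+m)) * (ℓ - log (E+m))
          else (1/(E+m)) * (- log (E+m)) := by
      intro i
      rw [hpp i, hD]
      have h1 : exp (c+ℓ) / (exp c * (E+m)) = E/(E+m) := by
        rw [exp_add, hEdef]
        field_simp
      have h2 : exp c / (exp c * (E+m)) = 1/(E+m) := by
        field_simp
      have h3 : log (E/(E+m)) = ℓ - log (E+m) := by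
        rw [log_div (ne_of_gt hE0) (ne_of_gt hEm), hEdef, log_exp]
      have h4 : log (1/(E+m)) = - log (E+m) := by
        rw [one_div, log_inv]
      split_ifs with h
      · rw [h1, h3]
      · rw [h2, h4]
    rw [Finset.sum_congr rfl fun i _ => hterm i, hsumgen]
  have hHval : (-∑ i, pp i * log (pp i)) = log (1 + ε) + ℓ * ε / (1 + ε) := by
    rw [hH, hL]
    have hεE : m = ε * E := by rw [hεdef]; field_simp
    rw [hεE]
    field_simp
    ring
  -- rewrite the target quantities in terms of ε
  have hexp1 : m * exp (-ℓ) = ε := by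
    rw [exp_neg, hεdef, hEdef]; field_simp
  have hexp2 : m ^ 2 * exp (-2 * ℓ) = ε ^ 2 := by
    have : exp (-2 * ℓ) = exp (-ℓ) * exp (-ℓ) := by
      rw [← exp_add]; ring_nf
    rw [this, hεdef]
    rw [exp_neg, hEdef]
    field_simp
  -- log bounds
  have hlog_le : log (1 + ε) ≤ ε := by
    have := Real.log_le_sub_one_of_pos h1ε
    linarith
  have hlog_ge : ε - ε ^ 2 ≤ log (1 + ε) := by
    have h1 : log (1/(1+ε)) ≤ 1/(1+ε) - 1 :=
      Real.log_le_sub_one_of_pos (by positivity)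
    rw [one_div, log_inv] at h1
    have h7 : (1:ℝ) - (1+ε)⁻¹ = ε/(1+ε) := by field_simp; ring
    have h2 : ε - ε ^ 2 ≤ 1 - (1+ε)⁻¹ := by
      rw [h7, le_div_iff₀ h1ε]; nlinarith
    linarith
  have hd1 : ℓ * ε / (1 + ε) ≤ ℓ * ε :=
    div_le_self (by positivity) (by linarith)
  have hd2 : ℓ * ε - ℓ * ε ^ 2 ≤ ℓ * ε / (1 + ε) := by
    rw [le_div_iff₀ h1ε]
    nlinarith [mul_nonneg hℓ.le (mul_nonneg hε0.le (sq_nonneg ε))]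
  have hgoalM : m * (1 + ℓ) * exp (-ℓ) = (1 + ℓ) * ε := by
    rw [← hexp1]; ring
  have hgoalR : (1:ℝ) * m ^ 2 * exp (-2 * ℓ) * (1 + ℓ) = ε ^ 2 * (1 + ℓ) := by
    rw [← hexp2]; ring
  rw [hHval, hgoalM, hgoalR, abs_le]
  clear hpp hH hD hsumgen hHval hexp1 hexp2 hgoalM hgoalR hL
  clear_value m E ε
  constructor
  · nlinarith [hlog_ge, hd2, sq_nonneg ε]
  · nlinarith [hlog_le, hd1, sq_nonneg ε]
end

section
/- For the categorical distribution with probabilities π_1 = 1/(1+(K-1)e^{-g}) and π_i = e^{-g}/(1+(K-1)e^{-g}) for 2 ≤ i ≤ K, the entropy is a strictly decreasing function of g on (0,∞). -/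
open Real Finset

theorem rvq_entropy_strictAnti
    (K : ℕ) (hK : 2 ≤ K) :
    StrictAntiOn
      (fun g : ℝ =>
        -∑ i : Fin K,
          (if (i : ℕ) = 0 then 1 / (1 + (K - 1 : ℝ) * exp (-g))
            else exp (-g) / (1 + (K - 1 : ℝ) * exp (-g)))
          * log (if (i : ℕ) = 0 then 1 / (1 + (K - 1 : ℝ) * exp (-g))
            else exp (-g) / (1 + (K - 1 : ℝ) * exp (-g))))
      (Set.Ioi (0 : ℝ)) := by
  haveI : NeZero K := ⟨by omega⟩
  set c : ℝ := (K : ℝ) - 1 with hc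
  have hc1 : (1 : ℝ) ≤ c := by
    have : (2 : ℝ) ≤ (K : ℝ) := by exact_mod_cast hK
    rw [hc]; linarith
  have hcpos : (0 : ℝ) < c := lt_of_lt_of_le one_pos hc1
  have hDpos : ∀ g : ℝ, (0 : ℝ) < 1 + c * exp (-g) := fun g =>
    add_pos one_pos (mul_pos hcpos (exp_pos _))
  set h : ℝ → ℝ := fun g => log (1 + c * exp (-g)) + c * (g * exp (-g)) / (1 + c * exp (-g))
    with hhdef
  have hFh : (fun g : ℝ =>
        -∑ i : Fin K,
          (if (i : ℕ) = 0 then 1 / (1 + c * exp (-g))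
            else exp (-g) / (1 + c * exp (-g)))
          * log (if (i : ℕ) = 0 then 1 / (1 + c * exp (-g))
            else exp (-g) / (1 + c * exp (-g)))) = h := by
    funext g
    have hD0 : (1 + c * exp (-g)) ≠ 0 := (hDpos g).ne'
    set D : ℝ := 1 + c * exp (-g) with hD
    set a : ℝ := (1 / D) * log (1 / D) with ha
    set b : ℝ := (exp (-g) / D) * log (exp (-g) / D) with hb
    have hstep : ∀ i : Fin K,
        (if (i : ℕ) = 0 then 1 / D else exp (-g) / D)
          * log (if (i : ℕ) = 0 then 1 / D else exp (-g) / D)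
        = (if (i : ℕ) = 0 then a else b) := by
      intro i; split_ifs <;> rfl
    have hsum : ∑ i : Fin K, (if (i : ℕ) = 0 then a else b) = a + ((K : ℝ) - 1) * b := by
      rw [← Finset.add_sum_erase _ _ (Finset.mem_univ (0 : Fin K))]
      simp only [Fin.val_zero, if_pos rfl]
      congr 1
      have : ∀ i ∈ (Finset.univ : Finset (Fin K)).erase 0,
          (if (i : ℕ) = 0 then a else b) = b := by
        intro i hi
        have hi0 : i ≠ 0 := (Finset.mem_erase.mp hi).1
        have : (i : ℕ) ≠ 0 := fun hv => hi0 (Fin.ext (by simp [hv]))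
        simp [this]
      rw [Finset.sum_congr rfl this, Finset.sum_const,
        Finset.card_erase_of_mem (Finset.mem_univ _)]
      simp only [Finset.card_univ, Fintype.card_fin, nsmul_eq_mul]
      congr 1
      have h1K : 1 ≤ K := by omega
      push_cast [Nat.cast_sub h1K]
      ring
    simp only [hstep]
    rw [hsum, ha, hb]
    have hlog1 : log (1 / D) = -log D := by rw [one_div, Real.log_inv]
    have hlog2 : log (exp (-g) / D) = -g - log D := by
      rw [Real.log_div (exp_ne_zero _) hD0, Real.log_exp]
    rw [hlog1, hlog2, hhdef]
    have hc' : (K : ℝ) - 1 = c := hc.symm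
    rw [hc']
    have hDD : D = 1 + c * exp (-g) := hD
    field_simp
    rw [hDD]; ring
  rw [hFh]
  -- now prove StrictAntiOn h (Ioi 0)
  have hcont : Continuous h := by
    apply Continuous.add
    · exact (continuous_const.add (continuous_const.mul (continuous_neg.rexp))).log
        (fun g => (hDpos g).ne')
    · exact ((continuous_const.mul (continuous_id.mul continuous_neg.rexp)).div
        (continuous_const.add (continuous_const.mul continuous_neg.rexp))
        (fun g => (hDpos g).ne'))
  have hderiv : ∀ x : ℝ, HasDerivAt h
      (-(x * c * exp (-x)) / (1 + c * exp (-x)) ^ 2) x := by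
    intro x
    have hE : HasDerivAt (fun g : ℝ => exp (-g)) (-exp (-x)) x := by
      simpa [Function.comp_def] using ((Real.hasDerivAt_exp (-x)).comp x (hasDerivAt_neg x))
    have hD : HasDerivAt (fun g : ℝ => 1 + c * exp (-g)) (c * -exp (-x)) x :=
      (hE.const_mul c).const_add 1
    have hD0 : (1 + c * exp (-x)) ≠ 0 := (hDpos x).ne'
    have hlog : HasDerivAt (fun g : ℝ => log (1 + c * exp (-g)))
        ((c * -exp (-x)) / (1 + c * exp (-x))) x := hD.log hD0
    have hgE : HasDerivAt (fun g : ℝ => g * exp (-g))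
        (1 * exp (-x) + x * -exp (-x)) x := (hasDerivAt_id x).mul hE
    have hN : HasDerivAt (fun g : ℝ => c * (g * exp (-g)))
        (c * (1 * exp (-x) + x * -exp (-x))) x := hgE.const_mul c
    have hfrac := hN.div hD hD0
    have htot := hlog.add hfrac
    refine htot.congr_deriv ?_
    have hE0 : exp (-x) > 0 := exp_pos _
    field_simp
    ring
  apply strictAntiOn_of_deriv_neg (convex_Ioi (0 : ℝ)) hcont.continuousOn
  intro x hx
  rw [interior_Ioi] at hx
  have hx0 : 0 < x := hx
  rw [(hderiv x).deriv]
  have hnum : 0 < x * c * exp (-x) := mul_pos (mul_pos hx0 hcpos) (exp_pos _)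
  have hden : 0 < (1 + c * exp (-x)) ^ 2 := pow_pos (hDpos x) 2
  exact div_neg_of_neg_of_pos (neg_neg_of_pos hnum) hden
end
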